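/- Let G be a finite connected claw-free block graph with at least two blocks. Then the number of cut vertices of G equals the number of blocks of G minus one. -/

import Mathlib

open scoped Classical

/-- A rooted `X`-tree on vertex type `V`: a finite rooted tree encoded by a parent
function, whose leaves (the vertices with no children) are bijectively labelled by `X`. -/
structure XTree (X V : Type) where
  root : V
  parent : V → V
  parent_root : parent root = root
  reaches : ∀ v : V, ∃ n : ℕ, parent^[n] v = root
  leaf : X → V
  leaf_inj : Function.Injective leaf
  leaf_iff : ∀ v : V, (∀ w : V, parent w = v → w = v) ↔ v ∈ Set.range leaf

namespace XTree

variable {X V : Type}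

/-- The children of a vertex. -/
def children (T : XTree X V) (v : V) : Set V := {w | T.parent w = v ∧ w ≠ v}

def IsLeaf (T : XTree X V) (v : V) : Prop := v ∈ Set.range T.leaf

def Interior (T : XTree X V) (v : V) : Prop := ¬ T.IsLeaf v

/-- Phylogenetic: root has at least two children, and no non-root vertex has exactly
one child (no degree-two vertices apart from possibly the root). -/
def IsPhylo (T : XTree X V) : Prop :=
  2 ≤ (T.children T.root).ncard ∧
    ∀ v : V, v ≠ T.root → T.Interior v → 2 ≤ (T.children v).ncard

/-- `T.Desc v w` : `w` is a descendant of `v` (or equal to `v`). -/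
def Desc (T : XTree X V) (v w : V) : Prop := ∃ n : ℕ, T.parent^[n] w = v

/-- The set of leaf labels below a vertex. -/
def leafSet (T : XTree X V) (v : V) : Set X := {x | T.Desc v (T.leaf x)}

/-- `v` is the last common ancestor of the set `S` of vertices. -/
def IsLCA (T : XTree X V) (v : V) (S : Set V) : Prop :=
  (∀ w ∈ S, T.Desc v w) ∧ ∀ u : V, (∀ w ∈ S, T.Desc u w) → T.Desc u v

/-- Not a star tree: some interior vertex other than the root. -/
def NonDegenerate (T : XTree X V) : Prop := ∃ v : V, T.Interior v ∧ v ≠ T.root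

end XTree

/-- A cord: a 2-element subset of `X`. -/
def IsCord {X : Type} (c : Set X) : Prop := ∃ a b : X, a ≠ b ∧ c = {a, b}

/-- The graph `Γ(L)` with vertex set `X` and edge set `L`. -/
def cordGraph {X : Type} (L : Set (Set X)) : SimpleGraph X where
  Adj a b := a ≠ b ∧ ({a, b} : Set X) ∈ L
  symm := by
    constructor; intro a b h
    exact ⟨Ne.symm h.1, by rw [Set.pair_comm]; exact h.2⟩
  loopless := by constructor; intro a h; exact h.1 rfl

/-- Topological lasso, via the child-edge graph characterization: for every interior
vertex, any two distinct child subtrees are joined by a cord of `L`. -/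
def XTree.IsTopoLasso {X V : Type} (T : XTree X V) (L : Set (Set X)) : Prop :=
  ∀ v c₁ c₂ : V, c₁ ∈ T.children v → c₂ ∈ T.children v → c₁ ≠ c₂ →
    ∃ a b : X, a ∈ T.leafSet c₁ ∧ b ∈ T.leafSet c₂ ∧ ({a, b} : Set X) ∈ L

/-- Set-inclusion minimal topological lasso. -/
def XTree.IsMinTopoLasso {X V : Type} (T : XTree X V) (L : Set (Set X)) : Prop :=
  T.IsTopoLasso L ∧ ∀ L' ⊆ L, T.IsTopoLasso L' → L' = L

/-- A nonempty vertex set inducing a connected subgraph with no cut vertex. -/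
def GoodSet {α : Type} (G : SimpleGraph α) (B : Set α) : Prop :=
  B.Nonempty ∧ (G.induce B).Connected ∧
    ∀ v ∈ B, (B \ {v}).Nonempty → (G.induce (B \ {v})).Connected

/-- A block: a maximal connected induced subgraph without a cut vertex. -/
def IsBlock {α : Type} (G : SimpleGraph α) (B : Set α) : Prop :=
  GoodSet G B ∧ ∀ C : Set α, GoodSet G C → B ⊆ C → B = C

/-- A block graph: every block is a clique. -/
def IsBlockGraph {α : Type} (G : SimpleGraph α) : Prop :=
  ∀ B : Set α, IsBlock G B → G.IsClique B

/-- A cut vertex: deleting it disconnects the graph. -/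
def IsCutVtx {α : Type} (G : SimpleGraph α) (v : α) : Prop :=
  ¬ (G.induce {w | w ≠ v}).Connected

/-- Claw-free: no induced `K_{1,3}`. -/
def ClawFree {α : Type} (G : SimpleGraph α) : Prop :=
  ¬ ∃ v a b c : α, a ≠ b ∧ a ≠ c ∧ b ≠ c ∧
    G.Adj v a ∧ G.Adj v b ∧ G.Adj v c ∧ ¬ G.Adj a b ∧ ¬ G.Adj a c ∧ ¬ G.Adj b c

/-- The child-edge graph `G(L,v)`: vertices are the children of `v` (equivalently
the child edges of `v`), two of them adjacent if a cord of `L` joins their subtrees. -/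
def childGraph {X V : Type} (T : XTree X V) (L : Set (Set X)) (v : V) :
    SimpleGraph {c : V // c ∈ T.children v} where
  Adj c₁ c₂ := c₁ ≠ c₂ ∧ ∃ a b : X,
    a ∈ T.leafSet (c₁ : V) ∧ b ∈ T.leafSet (c₂ : V) ∧ ({a, b} : Set X) ∈ L
  symm := by
    constructor; rintro c₁ c₂ ⟨h, a, b, ha, hb, hm⟩
    exact ⟨Ne.symm h, b, a, hb, ha, by rw [Set.pair_comm]; exact hm⟩
  loopless := by constructor; rintro c ⟨h, -⟩; exact h rfl

/-- `cl(T)`: the clusters of non-root interior vertices. -/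
def clSet {X V : Type} (T : XTree X V) : Set (Set X) :=
  {A | ∃ v : V, v ≠ T.root ∧ T.Interior v ∧ A = T.leafSet v}

/-- A cluster marker map for `T` and the ordering of `X`:
`f A` is the `σ`-least element of `A` not used as marker of a proper subcluster. -/
def IsClusterMarker {X V : Type} [LinearOrder X] (T : XTree X V) (f : Set X → X) : Prop :=
  ∀ A ∈ clSet T,
    ((∃ B ∈ clSet T, B ⊂ A) →
      IsLeast (A \ {y | ∃ B ∈ clSet T, B ⊂ A ∧ f B = y}) (f A)) ∧
    ((¬ ∃ B ∈ clSet T, B ⊂ A) → IsLeast A (f A))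

/-- The marker of a child `c` of an interior vertex: the label of `c` if `c` is a leaf,
and `f (L(c))` if `c` is interior. -/
def markRel {X V : Type} (T : XTree X V) (f : Set X → X) (c : V) (a : X) : Prop :=
  T.leaf a = c ∨ (T.Interior c ∧ a = f (T.leafSet c))

/-- `L_{(T,f)}(v)`: all cords between markers of distinct children of `v`. -/
def lassoAt {X V : Type} (T : XTree X V) (f : Set X → X) (v : V) : Set (Set X) :=
  {c | ∃ c₁ c₂ : V, c₁ ∈ T.children v ∧ c₂ ∈ T.children v ∧ c₁ ≠ c₂ ∧
    ∃ a b : X, markRel T f c₁ a ∧ markRel T f c₂ b ∧ c = {a, b}}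

/-- `L_{(T,f)}`: the union over all interior vertices of `L_{(T,f)}(v)`. -/
def lassoFull {X V : Type} (T : XTree X V) (f : Set X → X) : Set (Set X) :=
  {c | ∃ v : V, T.Interior v ∧ c ∈ lassoAt T f v}

/-- An equidistant proper edge-weighting of `T`, encoded by the height function
`t v` = distance from `v` to any leaf below it (so all leaves are equidistant
from the root); properness: interior edges have positive weight. -/
def EquidistantProper {X V : Type} (T : XTree X V) (t : V → ℝ) : Prop :=
  (∀ x : X, t (T.leaf x) = 0) ∧ (∀ v : V, t v ≤ t (T.parent v)) ∧
    ∀ v : V, v ≠ T.root → T.Interior v → t v < t (T.parent v)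

/-- Equivalence of two `X`-trees: a root-, parent- and labelling-preserving bijection. -/
def TreeEquiv {X V V' : Type} (T : XTree X V) (T' : XTree X V') : Prop :=
  ∃ φ : V ≃ V', φ T.root = T'.root ∧ (∀ v, φ (T.parent v) = T'.parent (φ v)) ∧
    ∀ x, φ (T.leaf x) = T'.leaf x

/-- `S` is (equivalent to) the restriction `T|_Y`: the clusters of `S` are exactly the
nonempty traces on `Y` of the clusters of `T`. -/
def IsRestriction {X : Type} (Y : Set X) {V W : Type}
    (T : XTree X V) (S : XTree (↥Y) W) : Prop :=
  ∀ A : Set X, A ⊆ Y →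
    ((∃ w : W, A = Subtype.val '' S.leafSet w) ↔ (A.Nonempty ∧ ∃ v : V, A = T.leafSet v ∩ Y))

/-- The restriction `L|_Y` of a set of cords of `X` to cords of `Y`. -/
def restrictLasso {X : Type} (Y : Set X) (L : Set (Set X)) : Set (Set ↥Y) :=
  {c | ∃ a b : ↥Y, a ≠ b ∧ c = {a, b} ∧ ({(a : X), (b : X)} : Set X) ∈ L}

/-! Claw-freeness forces every vertex into at most two blocks, and the vertices lying in two
blocks are exactly the cut vertices, so cut vertices correspond bijectively to the edges of the
block intersection graph. That graph is a tree: it is connected because `G` is, and each of its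
edges `B – B'` is a bridge, because a walk of blocks avoiding it would yield a path from
`B \ {v}` to `B' \ {v}` avoiding their common vertex `v`; closed up through `v`, that path is a
cycle, hence lies in a single block, forcing `B = B'`. A tree has one edge fewer than vertices. -/

open SimpleGraph

variable {α : Type} {G : SimpleGraph α}

namespace SimpleGraph

lemma induce_connected_of_forall_walk {s : Set α} {u : α} (hu : u ∈ s)
    (h : ∀ a ∈ s, ∃ p : G.Walk u a, ∀ c ∈ p.support, c ∈ s) : (G.induce s).Connected := by
  rw [connected_iff_exists_forall_reachable]
  refine ⟨⟨u, hu⟩, fun ⟨a, ha⟩ => ?_⟩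
  obtain ⟨p, hp⟩ := h a ha
  exact ⟨p.induce s hp⟩

lemma Reachable.exists_isPath_of_induce {s : Set α} {x y : α} {hx : x ∈ s} {hy : y ∈ s}
    (h : (G.induce s).Reachable ⟨x, hx⟩ ⟨y, hy⟩) :
    ∃ p : G.Walk x y, p.IsPath ∧ ∀ c ∈ p.support, c ∈ s := by
  obtain ⟨q, hq⟩ := h.exists_isPath
  refine ⟨q.map (Embedding.induce s).toHom, hq.map Subtype.val_injective, fun c hc => ?_⟩
  have hc' : c ∈ (q.map (Embedding.induce s).toHom).support := hc
  rw [Walk.support_map, List.mem_map] at hc'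
  obtain ⟨c', -, rfl⟩ := hc'
  exact c'.2

lemma IsClique.reachable_induce {s C : Set α} (hC : G.IsClique C) {x y : α} (hxC : x ∈ C)
    (hyC : y ∈ C) (hx : x ∈ s) (hy : y ∈ s) : (G.induce s).Reachable ⟨x, hx⟩ ⟨y, hy⟩ := by
  by_cases hxy : x = y
  · subst hxy
    rfl
  · exact Adj.reachable (hC hxC hyC hxy)

lemma IsClique.induce_connected {s : Set α} (hs : G.IsClique s) (hne : s.Nonempty) :
    (G.induce s).Connected := by
  have : Nonempty s := hne.to_subtype
  rw [induce_eq_top.mpr hs]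
  exact connected_top

lemma Reachable.exists_adj_walk_not_mem_support {v u : α} (h : G.Reachable v u) (hne : v ≠ u) :
    ∃ x, G.Adj v x ∧ ∃ q : G.Walk x u, v ∉ q.support := by
  obtain ⟨p, hp⟩ := h.exists_isPath
  obtain ⟨x, hvx, q, rfl⟩ := p.exists_eq_cons_of_ne hne
  exact ⟨x, hvx, q, ((Walk.cons_isPath_iff hvx q).mp hp).2⟩

lemma Connected.induce_ne_of_isClique_neighborSet [Nontrivial α] (hG : G.Connected) {v : α}
    (hN : G.IsClique (G.neighborSet v)) : (G.induce {w | w ≠ v}).Connected := by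
  obtain ⟨x₀, hvx₀⟩ := hG.preconnected.exists_adj_of_nontrivial v
  refine induce_connected_of_forall_walk hvx₀.ne' fun u hu => ?_
  obtain ⟨x, hvx, q, hq⟩ := (hG v u).exists_adj_walk_not_mem_support (Ne.symm hu)
  have hqv : ∀ c ∈ q.support, c ≠ v := fun c hc hcv => hq (hcv ▸ hc)
  by_cases hx : x₀ = x
  · subst hx
    exact ⟨q, hqv⟩
  · refine ⟨Walk.cons (hN hvx₀ hvx hx) q, fun c hc => ?_⟩
    rw [Walk.support_cons, List.mem_cons] at hc
    rcases hc with rfl | hc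
    exacts [hvx₀.ne', hqv c hc]

end SimpleGraph

section Blocks

variable {B B' A : Set α}

lemma goodSet_of_isClique (hne : A.Nonempty) (hA : G.IsClique A) : GoodSet G A :=
  ⟨hne, hA.induce_connected hne, fun _ _ hv => (hA.subset Set.sdiff_subset).induce_connected hv⟩

lemma exists_isBlock_superset [Finite α] (hA : GoodSet G A) : ∃ B, IsBlock G B ∧ A ⊆ B := by
  obtain ⟨B, ⟨hB, hAB⟩, hmax⟩ := Set.Finite.exists_maximalFor Set.ncard
    {C : Set α | GoodSet G C ∧ A ⊆ C} (Set.toFinite _) ⟨A, hA, subset_rfl⟩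
  refine ⟨B, ⟨hB, fun C hC hBC => ?_⟩, hAB⟩
  exact Set.eq_of_subset_of_ncard_le hBC (hmax ⟨hC, hAB.trans hBC⟩ (Set.ncard_le_ncard hBC))

lemma GoodSet.connected_diff_singleton (hB : GoodSet G B) {w c : α} (hc : c ∈ B) (hcw : c ≠ w) :
    (G.induce (B \ {w})).Connected := by
  by_cases hw : w ∈ B
  · exact hB.2.2 w hw ⟨c, hc, hcw⟩
  · rw [Set.sdiff_singleton_eq_self hw]
    exact hB.2.1

lemma GoodSet.union (hB : GoodSet G B) (hB' : GoodSet G B') {u v : α} (hu : u ∈ B ∩ B')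
    (hv : v ∈ B ∩ B') (huv : u ≠ v) : GoodSet G (B ∪ B') := by
  refine ⟨hB.1.mono Set.subset_union_left,
    induce_union_connected hB.2.1.preconnected hB'.2.1.preconnected ⟨u, hu⟩, fun w _ _ => ?_⟩
  obtain ⟨c, hc, hcw⟩ : ∃ c ∈ B ∩ B', c ≠ w := by
    by_cases huw : u = w
    exacts [⟨v, hv, huw ▸ huv.symm⟩, ⟨u, hu, huw⟩]
  rw [Set.union_sdiff_distrib]
  exact induce_union_connected (hB.connected_diff_singleton hc.1 hcw).preconnected
    (hB'.connected_diff_singleton hc.2 hcw).preconnected ⟨c, ⟨hc.1, hcw⟩, ⟨hc.2, hcw⟩⟩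

lemma IsBlock.eq_of_mem_inter (hB : IsBlock G B) (hB' : IsBlock G B') {u v : α}
    (hu : u ∈ B ∩ B') (hv : v ∈ B ∩ B') (huv : u ≠ v) : B = B' := by
  have hunion := hB.1.union hB'.1 hu hv huv
  exact (hB.2 _ hunion Set.subset_union_left).trans (hB'.2 _ hunion Set.subset_union_right).symm

lemma IsBlock.exists_ne_mem [Nontrivial α] (hG : G.Connected) (hB : IsBlock G B) (v : α) :
    ∃ u ∈ B, u ≠ v := by
  obtain ⟨u, hvu⟩ := hG.preconnected.exists_adj_of_nontrivial v
  by_contra! hBv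
  have hpair : B = {v, u} := hB.2 _ (goodSet_of_isClique (Set.insert_nonempty _ _)
    (isClique_pair.mpr fun _ => hvu)) fun c hc => Or.inl (hBv c hc)
  exact hvu.ne (hBv u (hpair ▸ Or.inr rfl)).symm

lemma IsBlock.exists_adj_mem [Nontrivial α] (hG : G.Connected) (hbg : IsBlockGraph G)
    (hB : IsBlock G B) {v : α} (hv : v ∈ B) : ∃ x ∈ B, G.Adj v x := by
  obtain ⟨x, hx, hxv⟩ := hB.exists_ne_mem hG v
  exact ⟨x, hx, hbg B hB hv hx hxv.symm⟩

lemma nontrivial_of_one_lt_ncard_isBlock [Finite α] (h : 1 < {B : Set α | IsBlock G B}.ncard) :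
    Nontrivial α := by
  by_contra htriv
  rw [not_nontrivial_iff_subsingleton] at htriv
  have : {B : Set α | IsBlock G B}.ncard ≤ 1 := (Set.ncard_le_one_iff).mpr fun hB hB' =>
    hB.1.1.eq_univ.trans hB'.1.1.eq_univ.symm
  omega

lemma goodSet_insert_support {v x y : α} {p : G.Walk x y} (hp : p.IsPath) (hv : v ∉ p.support)
    (hvx : G.Adj v x) (hvy : G.Adj v y) : GoodSet G (insert v {a | a ∈ p.support}) := by
  set S := insert v {a | a ∈ p.support}
  refine ⟨Set.insert_nonempty _ _, ?_, fun w hw _ => ?_⟩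
  · refine induce_connected_of_forall_walk (Set.mem_insert v _) fun a ha => ?_
    rcases ha with rfl | ha
    · exact ⟨Walk.nil, fun c hc => List.mem_singleton.mp hc ▸ Set.mem_insert _ _⟩
    · refine ⟨Walk.cons hvx (p.takeUntil a ha), fun c hc => ?_⟩
      rw [Walk.support_cons, List.mem_cons] at hc
      exact hc.imp id fun h => p.support_takeUntil_subset_support ha h
  by_cases hwv : w = v
  · subst hwv
    have hSw : S \ {w} = {a | a ∈ p.support} := by
      ext a
      simp only [S, Set.mem_sdiff, Set.mem_insert_iff, Set.mem_ofPred_eq, Set.mem_singleton_iff]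
      exact ⟨fun h => h.1.resolve_left h.2, fun h => ⟨Or.inr h, fun ha => hv (ha ▸ h)⟩⟩
    rw [hSw]
    exact p.connected_induce_support
  have hwp : w ∈ p.support := hw.resolve_left hwv
  -- a vertex `a ≠ w` is reached from `v` along the part of `p` on the far side of `a` from `w`
  have toward : ∀ {z : α} (q : G.Walk z w), q.IsPath → G.Adj v z →
      (∀ c ∈ q.support, c ∈ p.support) → ∀ a ∈ q.support, a ≠ w →
        ∃ r : G.Walk v a, ∀ c ∈ r.support, c ∈ S \ {w} := by
    intro z q hq hvz hqp a ha haw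
    refine ⟨Walk.cons hvz (q.takeUntil a ha), fun c hc => ?_⟩
    rw [Walk.support_cons, List.mem_cons] at hc
    rcases hc with rfl | hc
    · exact ⟨Set.mem_insert _ _, Ne.symm hwv⟩
    · refine ⟨Or.inr (hqp c (q.support_takeUntil_subset_support ha hc)), ?_⟩
      rintro rfl
      exact Walk.endpoint_notMem_support_takeUntil hq ha haw.symm hc
  refine induce_connected_of_forall_walk ⟨Set.mem_insert v _, Ne.symm hwv⟩ fun a ⟨ha, haw⟩ => ?_
  rcases ha with rfl | ha
  · exact ⟨Walk.nil, fun c hc => List.mem_singleton.mp hc ▸ ⟨Set.mem_insert _ _, Ne.symm hwv⟩⟩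
  have hsplit : a ∈ (p.takeUntil w hwp).support ∨ a ∈ (p.dropUntil w hwp).reverse.support := by
    rw [Walk.support_reverse, List.mem_reverse, ← Walk.mem_support_append_iff, Walk.take_spec]
    exact ha
  rcases hsplit with h | h
  · exact toward _ (hp.takeUntil hwp) hvx
      (fun c hc => p.support_takeUntil_subset_support hwp hc) a h haw
  · refine toward _ (hp.dropUntil hwp).reverse hvy (fun c hc => ?_) a h haw
    rw [Walk.support_reverse, List.mem_reverse] at hc
    exact p.support_dropUntil_subset_support hwp hc

theorem not_reachable_induce_ne_of_mem_isBlock [Finite α] (hB : IsBlock G B) (hB' : IsBlock G B')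
    (hne : B ≠ B') {v x y : α} (hvB : v ∈ B) (hvB' : v ∈ B') (hxB : x ∈ B) (hyB' : y ∈ B')
    (hvx : G.Adj v x) (hvy : G.Adj v y) :
    ¬ (G.induce {w | w ≠ v}).Reachable ⟨x, hvx.ne'⟩ ⟨y, hvy.ne'⟩ := by
  intro hxy
  obtain ⟨p, hp, hpv⟩ := hxy.exists_isPath_of_induce
  obtain ⟨C, hC, hSC⟩ := exists_isBlock_superset
    (goodSet_insert_support hp (fun h => hpv v h rfl) hvx hvy)
  have hvC : v ∈ C := hSC (Set.mem_insert _ _)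
  have hBC : B = C := hB.eq_of_mem_inter hC ⟨hvB, hvC⟩
    ⟨hxB, hSC (Or.inr p.start_mem_support)⟩ hvx.ne
  have hB'C : B' = C := hB'.eq_of_mem_inter hC ⟨hvB', hvC⟩
    ⟨hyB', hSC (Or.inr p.end_mem_support)⟩ hvy.ne
  exact hne (hBC.trans hB'C.symm)

theorem isCutVtx_iff_exists_isBlock [Finite α] [Nontrivial α] (hG : G.Connected)
    (hbg : IsBlockGraph G) {v : α} :
    IsCutVtx G v ↔ ∃ B B', IsBlock G B ∧ IsBlock G B' ∧ B ≠ B' ∧ v ∈ B ∧ v ∈ B' := by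
  constructor
  · intro hcut
    by_contra! honly
    obtain ⟨B, hB, hvB⟩ := exists_isBlock_superset
      (goodSet_of_isClique (Set.singleton_nonempty v) (isClique_singleton (G := G) v))
    refine hcut (hG.induce_ne_of_isClique_neighborSet ((hbg B hB).subset fun x hvx => ?_))
    obtain ⟨C, hC, hvxC⟩ := exists_isBlock_superset
      (goodSet_of_isClique (Set.insert_nonempty v {x}) (isClique_pair.mpr fun _ => hvx))
    have hCB : C = B := by
      by_contra hCB
      exact honly C B hC hB hCB (hvxC (Or.inl rfl)) (hvB rfl)
    exact hCB ▸ hvxC (Or.inr rfl)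
  · rintro ⟨B, B', hB, hB', hne, hvB, hvB'⟩ hconn
    obtain ⟨x, hxB, hvx⟩ := hB.exists_adj_mem hG hbg hvB
    obtain ⟨y, hyB', hvy⟩ := hB'.exists_adj_mem hG hbg hvB'
    exact not_reachable_induce_ne_of_mem_isBlock hB hB' hne hvB hvB' hxB hyB' hvx hvy
      (hconn.preconnected _ _)

end Blocks

def blockIntersectionGraph (G : SimpleGraph α) : SimpleGraph {B : Set α // IsBlock G B} where
  Adj B B' := B ≠ B' ∧ (B.1 ∩ B'.1).Nonempty
  symm := ⟨fun _ _ h => ⟨h.1.symm, Set.inter_comm _ _ ▸ h.2⟩⟩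
  loopless := ⟨fun _ h => h.1 rfl⟩

namespace blockIntersectionGraph

variable {B B' C : {B : Set α // IsBlock G B}}

lemma reachable_of_mem_inter {u : α} (hu : u ∈ B.1 ∩ B'.1) :
    (blockIntersectionGraph G).Reachable B B' := by
  by_cases h : B = B'
  · exact h ▸ Reachable.refl B
  · exact Adj.reachable ⟨h, u, hu⟩

lemma reachable_of_walk [Finite α] {u u' : α} (p : G.Walk u u') :
    u ∈ B.1 → u' ∈ B'.1 → (blockIntersectionGraph G).Reachable B B' := by
  induction p generalizing B with
  | nil => exact fun hu hu' => reachable_of_mem_inter ⟨hu, hu'⟩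
  | cons h q ih =>
    intro hu hu'
    obtain ⟨C, hC, hsub⟩ := exists_isBlock_superset
      (goodSet_of_isClique (Set.insert_nonempty _ _) (isClique_pair.mpr fun _ => h))
    exact (reachable_of_mem_inter (B' := ⟨C, hC⟩) ⟨hu, hsub (Or.inl rfl)⟩).trans
      (ih (hsub (Or.inr rfl)) hu')

theorem connected [Finite α] (hG : G.Connected) : (blockIntersectionGraph G).Connected := by
  obtain ⟨u⟩ := hG.nonempty
  obtain ⟨B, hB, -⟩ := exists_isBlock_superset
    (goodSet_of_isClique (Set.singleton_nonempty u) (isClique_singleton (G := G) u))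
  have : Nonempty {B : Set α // IsBlock G B} := ⟨⟨B, hB⟩⟩
  refine ⟨fun B B' => ?_⟩
  obtain ⟨x, hx⟩ := B.2.1.1
  obtain ⟨y, hy⟩ := B'.2.1.1
  exact reachable_of_walk (hG.preconnected x y).some hx hy

lemma mem_mk_of_mem_inter [Finite α] [Nontrivial α] (hG : G.Connected) (hcf : ClawFree G)
    (hbg : IsBlockGraph G) (hne : B ≠ B') {v : α} (hv : v ∈ B.1 ∩ B'.1) (hC : v ∈ C.1) :
    C ∈ s(B, B') := by
  by_contra hCB
  rw [Sym2.mem_iff, not_or] at hCB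
  have sep : ∀ {D D' : {B : Set α // IsBlock G B}} {a b : α}, D ≠ D' → v ∈ D.1 → v ∈ D'.1 →
      a ∈ D.1 → b ∈ D'.1 → G.Adj v a → G.Adj v b → a ≠ b ∧ ¬ G.Adj a b := by
    intro D D' a b hDD' hvD hvD' haD hbD' hva hvb
    have hsep := not_reachable_induce_ne_of_mem_isBlock D.2 D'.2
      (Subtype.coe_injective.ne hDD') hvD hvD' haD hbD' hva hvb
    refine ⟨?_, fun hab => hsep (Adj.reachable hab)⟩
    rintro rfl
    exact hsep (Reachable.refl _)
  obtain ⟨x, hxB, hvx⟩ := B.2.exists_adj_mem hG hbg hv.1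
  obtain ⟨y, hyB', hvy⟩ := B'.2.exists_adj_mem hG hbg hv.2
  obtain ⟨z, hzC, hvz⟩ := C.2.exists_adj_mem hG hbg hC
  have hxy := sep hne hv.1 hv.2 hxB hyB' hvx hvy
  have hxz := sep (Ne.symm hCB.1) hv.1 hC hxB hzC hvx hvz
  have hyz := sep (Ne.symm hCB.2) hv.2 hC hyB' hzC hvy hvz
  exact hcf ⟨v, x, y, z, hxy.1, hxz.1, hyz.1, hvx, hvy, hvz, hxy.2, hxz.2, hyz.2⟩

theorem isAcyclic [Finite α] [Nontrivial α] (hG : G.Connected) (hcf : ClawFree G)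
    (hbg : IsBlockGraph G) : (blockIntersectionGraph G).IsAcyclic := by
  rw [isAcyclic_iff_forall_adj_isBridge]
  rintro B B' ⟨hne, v, hv⟩
  rw [isBridge_iff_forall_walk_mem_edges]
  by_contra! ⟨p, hp⟩
  -- consecutive blocks of a walk avoiding the edge `B – B'` meet outside `v`
  have key : ∀ {C C'} (q : (blockIntersectionGraph G).Walk C C'), s(B, B') ∉ q.edges →
      ∀ x ∈ C.1, ∀ (hxv : x ≠ v), ∀ y ∈ C'.1, ∀ (hyv : y ≠ v),
        (G.induce {w | w ≠ v}).Reachable ⟨x, hxv⟩ ⟨y, hyv⟩ := by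
    intro C C' q
    induction q with
    | @nil C => exact fun _ x hx hxv y hy hyv => (hbg _ C.2).reachable_induce hx hy hxv hyv
    | @cons C D C' hCD q ih =>
      intro hq x hx hxv y hy hyv
      rw [Walk.edges_cons, List.mem_cons, not_or] at hq
      obtain ⟨w, hwC, hwD⟩ := hCD.2
      have hwv : w ≠ v := by
        rintro rfl
        exact hq.1 (Sym2.eq_of_ne_mem hCD.1 (Sym2.mem_mk_left _ _) (Sym2.mem_mk_right _ _)
          (mem_mk_of_mem_inter hG hcf hbg hne hv hwC)
          (mem_mk_of_mem_inter hG hcf hbg hne hv hwD)).symm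
      exact ((hbg _ C.2).reachable_induce hx hwC hxv hwv).trans (ih hq.2 w hwD hwv y hy hyv)
  obtain ⟨x, hxB, hvx⟩ := B.2.exists_adj_mem hG hbg hv.1
  obtain ⟨y, hyB', hvy⟩ := B'.2.exists_adj_mem hG hbg hv.2
  exact not_reachable_induce_ne_of_mem_isBlock B.2 B'.2 (Subtype.coe_injective.ne hne)
    hv.1 hv.2 hxB hyB' hvx hvy (key p hp x hxB hvx.ne' y hyB' hvy.ne')

theorem ncard_isCutVtx_eq_ncard_edgeSet [Finite α] [Nontrivial α] (hG : G.Connected)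
    (hcf : ClawFree G) (hbg : IsBlockGraph G) :
    {v | IsCutVtx G v}.ncard = (blockIntersectionGraph G).edgeSet.ncard := by
  have two : ∀ v, IsCutVtx G v → ∃ B B' : {B : Set α // IsBlock G B}, B ≠ B' ∧ v ∈ B.1 ∩ B'.1 := by
    intro v hv
    obtain ⟨B, B', hB, hB', hne, hvB, hvB'⟩ := (isCutVtx_iff_exists_isBlock hG hbg).mp hv
    exact ⟨⟨B, hB⟩, ⟨B', hB'⟩, fun h => hne (congrArg Subtype.val h), hvB, hvB'⟩
  choose B₁ B₂ hne hmem using two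
  refine Set.ncard_congr (fun v hv => s(B₁ v hv, B₂ v hv)) (fun v hv => ⟨hne v hv, v, hmem v hv⟩)
    (fun u v hu hv huv => ?_) ?_
  · by_contra huv'
    have hvB : ∀ C ∈ s(B₁ u hu, B₂ u hu), v ∈ C.1 := by
      rw [huv]
      intro C hC
      rcases Sym2.mem_iff.mp hC with rfl | rfl
      exacts [(hmem v hv).1, (hmem v hv).2]
    exact hne u hu (Subtype.ext ((B₁ u hu).2.eq_of_mem_inter (B₂ u hu).2 (hmem u hu)
      ⟨hvB _ (Sym2.mem_mk_left _ _), hvB _ (Sym2.mem_mk_right _ _)⟩ huv'))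
  · refine Sym2.ind fun B B' hBB' => ?_
    obtain ⟨hne', w, hw⟩ := hBB'
    have hcut : IsCutVtx G w := (isCutVtx_iff_exists_isBlock hG hbg).mpr
      ⟨B.1, B'.1, B.2, B'.2, Subtype.coe_injective.ne hne', hw.1, hw.2⟩
    exact ⟨w, hcut, Sym2.eq_of_ne_mem (hne w hcut) (Sym2.mem_mk_left _ _) (Sym2.mem_mk_right _ _)
      (mem_mk_of_mem_inter hG hcf hbg hne' hw (hmem w hcut).1)
      (mem_mk_of_mem_inter hG hcf hbg hne' hw (hmem w hcut).2)⟩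

end blockIntersectionGraph

/-- a finite connected claw-free block graph with at least two blocks has
exactly (number of blocks) - 1 cut vertices. -/
theorem stmt4 {α : Type} [Fintype α] (G : SimpleGraph α)
    (hconn : G.Connected) (hcf : ClawFree G) (hbg : IsBlockGraph G)
    (h2 : 2 ≤ {B : Set α | IsBlock G B}.ncard) :
    {v : α | IsCutVtx G v}.ncard = {B : Set α | IsBlock G B}.ncard - 1 := by
  have : Nontrivial α := nontrivial_of_one_lt_ncard_isBlock h2
  have htree : (blockIntersectionGraph G).IsTree :=
    ⟨blockIntersectionGraph.connected hconn, blockIntersectionGraph.isAcyclic hconn hcf hbg⟩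
  have hcard := htree.card_edgeFinset
  have hblocks : {B : Set α | IsBlock G B}.ncard = Fintype.card {B // IsBlock G B} :=
    (Nat.card_coe_set_eq _).symm.trans Nat.card_eq_fintype_card
  rw [blockIntersectionGraph.ncard_isCutVtx_eq_ncard_edgeSet hconn hcf hbg, ← coe_edgeFinset,
    Set.ncard_coe_finset, hblocks]
  omega
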